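/- Let D be a dendron and let u, v be distinct points of D. Then there exists a continuous interval-preserving function f : D → ℝ with values in [0,1] such that f(u) = 0 and f(v) = 1. -/

import Mathlib

/-- A point `w` separates the points `u` and `v` in a topological space `X` if the complement
of `{w}` is the union of two disjoint open sets, one containing `u` and the other `v`. -/
def Separates {X : Type*} [TopologicalSpace X] (w u v : X) : Prop :=
  ∃ U V : Set X, IsOpen U ∧ IsOpen V ∧ u ∈ U ∧ v ∈ V ∧ Disjoint U V ∧ ({w}ᶜ : Set X) = U ∪ V

/-- `w` is between `u` and `v`: `w` separates `u` and `v`, or `w ∈ {u, v}`. -/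
def Between {X : Type*} [TopologicalSpace X] (u w v : X) : Prop :=
  Separates w u v ∨ w = u ∨ w = v

/-!
A cut at a point `w` splits `D \ {w}` into two disjoint open sides; order cuts by "the closed left
side of one lies in the open left side of the other". In a connected space each closed side is
connected, and in a dendron a point separating two cut points yields a cut strictly between the
two, so the order is dense. Hence there are cuts `g t`, increasing in `t` along the dyadic
rationals of `[0, 1]`, from a cut with `u` on its left to one with `v` on its right. As in
Urysohn's lemma, `f x = inf ({1} ∪ {t | x is left of g t})` is continuous; its sublevel and
superlevel sets are closed sides of cuts, hence connected, which makes `f` interval preserving.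
-/

open Set

structure PointCut (X : Type*) [TopologicalSpace X] where
  point : X
  left : Set X
  right : Set X
  isOpen_left : IsOpen left
  isOpen_right : IsOpen right
  disjoint_left_right : Disjoint left right
  compl_singleton_eq : {point}ᶜ = left ∪ right

namespace PointCut

variable {X : Type*} [TopologicalSpace X] (c : PointCut X)

lemma point_notMem_left : c.point ∉ c.left := fun h =>
  (c.compl_singleton_eq.symm.subset (Or.inl h) : c.point ∈ ({c.point}ᶜ : Set X)) rfl

lemma point_notMem_right : c.point ∉ c.right := fun h =>
  (c.compl_singleton_eq.symm.subset (Or.inr h) : c.point ∈ ({c.point}ᶜ : Set X)) rfl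

lemma compl_left : c.leftᶜ = insert c.point c.right := by
  ext x
  by_cases hx : x = c.point
  · subst hx
    simp [c.point_notMem_left]
  · have hx' : x ∈ c.left ∪ c.right := c.compl_singleton_eq ▸ hx
    have := c.disjoint_left_right
    simp only [mem_compl_iff, mem_insert_iff, hx, false_or]
    rcases hx' with h | h
    · simpa [h] using this.notMem_of_mem_left h
    · simpa [h] using this.notMem_of_mem_right h

def symm : PointCut X where
  point := c.point
  left := c.right
  right := c.left
  isOpen_left := c.isOpen_right
  isOpen_right := c.isOpen_left
  disjoint_left_right := c.disjoint_left_right.symm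
  compl_singleton_eq := c.compl_singleton_eq.trans (union_comm _ _)

@[simp] lemma symm_point : c.symm.point = c.point := rfl
@[simp] lemma symm_left : c.symm.left = c.right := rfl
@[simp] lemma symm_right : c.symm.right = c.left := rfl
@[simp] lemma symm_symm : c.symm.symm = c := rfl

lemma compl_insert_left : (insert c.point c.left)ᶜ = c.right := by
  simpa using congrArg compl c.symm.compl_left.symm

lemma isClosed_insert_left : IsClosed (insert c.point c.left) :=
  isOpen_compl_iff.mp (c.compl_insert_left ▸ c.isOpen_right)

lemma isPreconnected_insert_left [PreconnectedSpace X] :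
    IsPreconnected (insert c.point c.left) := by
  rw [isPreconnected_iff_subset_of_fully_disjoint_closed c.isClosed_insert_left]
  intro F₁ F₂ hF₁ hF₂ hcover hdisj
  wlog hp : c.point ∈ F₁ generalizing F₁ F₂
  · have hp₂ : c.point ∈ F₂ := (hcover (mem_insert _ _)).resolve_left hp
    exact (this F₂ F₁ hF₂ hF₁ (union_comm F₁ F₂ ▸ hcover) hdisj.symm hp₂).symm
  -- The part of `insert c.point c.left` in `F₂` misses `c.point`, so it is also open in `X`.
  have hK : insert c.point c.left ∩ F₂ = c.left ∩ F₁ᶜ := by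
    ext x
    constructor
    · rintro ⟨rfl | hx, hx₂⟩
      · exact absurd hx₂ (hdisj.notMem_of_mem_left hp)
      · exact ⟨hx, hdisj.notMem_of_mem_right hx₂⟩
    · rintro ⟨hx, hx₁⟩
      exact ⟨mem_insert_of_mem _ hx, (hcover (mem_insert_of_mem _ hx)).resolve_left hx₁⟩
  have hclopen : IsClopen (insert c.point c.left ∩ F₂) :=
    ⟨c.isClosed_insert_left.inter hF₂, hK ▸ c.isOpen_left.inter hF₁.isOpen_compl⟩
  rcases isClopen_iff.mp hclopen with h | h
  · left
    intro x hx
    exact (hcover hx).resolve_right fun hx₂ => (h.subset ⟨hx, hx₂⟩ : x ∈ (∅ : Set X))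
  · exact absurd (h.symm.subset (mem_univ c.point)).2 (hdisj.notMem_of_mem_left hp)

lemma isPreconnected_insert_right [PreconnectedSpace X] :
    IsPreconnected (insert c.point c.right) :=
  c.symm.isPreconnected_insert_left

lemma subset_left_of_isPreconnected {s : Set X} (hs : IsPreconnected s) (hp : c.point ∉ s)
    {a : X} (ha : a ∈ s) (haL : a ∈ c.left) : s ⊆ c.left := by
  refine hs.subset_left_of_subset_union c.isOpen_left c.isOpen_right c.disjoint_left_right
    (fun x hx => ?_) ⟨a, ha, haL⟩
  rw [← c.compl_singleton_eq]
  rintro rfl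
  exact hp hx

lemma point_mem_of_isPreconnected {s : Set X} (hs : IsPreconnected s) {a b : X}
    (ha : a ∈ s) (haL : a ∈ c.left) (hb : b ∈ s) (hbR : b ∈ c.right) : c.point ∈ s := by
  by_contra hp
  exact c.disjoint_left_right.notMem_of_mem_left
    (c.subset_left_of_isPreconnected hs hp ha haL hb) hbR

end PointCut

lemma Separates.exists_pointCut {X : Type*} [TopologicalSpace X] {w a b : X}
    (h : Separates w a b) : ∃ c : PointCut X, c.point = w ∧ a ∈ c.left ∧ b ∈ c.right := by
  obtain ⟨U, V, hU, hV, ha, hb, hUV, hcompl⟩ := h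
  exact ⟨⟨w, U, V, hU, hV, hUV, hcompl⟩, rfl, ha, hb⟩

lemma Separates.mem_of_isPreconnected {X : Type*} [TopologicalSpace X] {w a b : X} {s : Set X}
    (h : Separates w a b) (hs : IsPreconnected s) (ha : a ∈ s) (hb : b ∈ s) : w ∈ s := by
  obtain ⟨c, rfl, haL, hbR⟩ := h.exists_pointCut
  exact c.point_mem_of_isPreconnected hs ha haL hb hbR

namespace PointCut

variable {X : Type*} [TopologicalSpace X]

instance : LT (PointCut X) := ⟨fun c c' => insert c.point c.left ⊆ c'.left⟩

lemma lt_def {c c' : PointCut X} : c < c' ↔ insert c.point c.left ⊆ c'.left := Iff.rfl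

instance : IsTrans (PointCut X) (· < ·) :=
  ⟨fun _ _ _ h₁ h₂ => (lt_def.mp h₁).trans ((subset_insert _ _).trans h₂)⟩

lemma symm_lt_symm_of_lt {c c' : PointCut X} (h : c < c') : c'.symm < c.symm := by
  rw [lt_def, symm_point, symm_left, symm_left, ← compl_left, ← compl_insert_left]
  exact compl_subset_compl.mpr h

lemma symm_lt_symm_iff {c c' : PointCut X} : c'.symm < c.symm ↔ c < c' :=
  ⟨fun h => by simpa using symm_lt_symm_of_lt h, symm_lt_symm_of_lt⟩

lemma left_subset_of_lt {c c' : PointCut X} (h : c < c') : c.left ⊆ c'.left :=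
  (subset_insert _ _).trans h

lemma point_mem_right_of_lt {c c' : PointCut X} (h : c < c') : c'.point ∈ c.right :=
  symm_lt_symm_of_lt h (mem_insert _ _)

variable [PreconnectedSpace X]

lemma lt_of_mem_right {c c' : PointCut X} {v : X} (hv : v ∈ c.right) (hc : c.point ∈ c'.left)
    (hv' : v ∈ c'.right) : c < c' := by
  have hne : c'.point ≠ c.point := fun h => c'.point_notMem_left (h ▸ hc)
  have hc' : c'.point ∈ c.right := by
    rcases c'.point_mem_of_isPreconnected c.isPreconnected_insert_right (mem_insert _ _) hc
      (mem_insert_of_mem _ hv) hv' with h | h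
    · exact absurd h hne
    · exact h
  refine c'.subset_left_of_isPreconnected c.isPreconnected_insert_left ?_ (mem_insert _ _) hc
  rw [← mem_compl_iff, compl_insert_left]
  exact hc'

lemma exists_lt_lt (hsep : ∀ a b : X, a ≠ b → ∃ w, Separates w a b) {c c' : PointCut X}
    (h : c < c') : ∃ m, c < m ∧ m < c' := by
  have hc' := point_mem_right_of_lt h
  obtain ⟨w, hw⟩ := hsep c.point c'.point fun he => c.point_notMem_right (he ▸ hc')
  obtain ⟨m, -, hl, hr⟩ := hw.exists_pointCut
  refine ⟨m, lt_of_mem_right hc' hl hr, ?_⟩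
  rw [← symm_lt_symm_iff]
  exact lt_of_mem_right (v := c.point) (h (mem_insert _ _)) hr hl

lemma exists_lt_of_ne (hsep : ∀ a b : X, a ≠ b → ∃ w, Separates w a b) {u v : X} (huv : u ≠ v) :
    ∃ c c' : PointCut X, u ∈ c.left ∧ v ∈ c'.right ∧ c < c' := by
  obtain ⟨w, hw⟩ := hsep u v huv
  obtain ⟨c, -, hu, hv⟩ := hw.exists_pointCut
  obtain ⟨w', hw'⟩ := hsep c.point v fun he => c.point_notMem_right (he ▸ hv)
  obtain ⟨c', -, hc, hv'⟩ := hw'.exists_pointCut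
  exact ⟨c, c', hu, hv', lt_of_mem_right hv hc hv'⟩

end PointCut

section DyadicFamily

variable {α : Type*} (mid : α → α → α) (a b : α)

/-- `dyadicFamily mid a b n k` is the element attached to `k / 2 ^ n`: level `n + 1` keeps the
elements of level `n` at even indices and inserts `mid` of two neighbours at odd ones. -/
def dyadicFamily : ℕ → ℕ → α
  | 0, k => if k = 0 then a else b
  | n + 1, k =>
    if k % 2 = 0 then dyadicFamily n (k / 2)
    else mid (dyadicFamily n (k / 2)) (dyadicFamily n (k / 2 + 1))

lemma dyadicFamily_succ_two_mul (n j : ℕ) :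
    dyadicFamily mid a b (n + 1) (2 * j) = dyadicFamily mid a b n j := by
  simp [dyadicFamily]

lemma dyadicFamily_succ_two_mul_add_one (n j : ℕ) :
    dyadicFamily mid a b (n + 1) (2 * j + 1) =
      mid (dyadicFamily mid a b n j) (dyadicFamily mid a b n (j + 1)) := by
  simp only [dyadicFamily]
  rw [if_neg (by omega), show (2 * j + 1) / 2 = j by omega]

lemma dyadicFamily_add_mul_two_pow (n k m : ℕ) :
    dyadicFamily mid a b (n + m) (k * 2 ^ m) = dyadicFamily mid a b n k := by
  induction m with
  | zero => simp
  | succ m ih =>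
    rw [← Nat.add_assoc, pow_succ, ← mul_assoc, mul_comm _ 2, dyadicFamily_succ_two_mul, ih]

lemma dyadicFamily_congr {n k n' k' : ℕ} (h : k * 2 ^ n' = k' * 2 ^ n) :
    dyadicFamily mid a b n k = dyadicFamily mid a b n' k' := by
  rw [← dyadicFamily_add_mul_two_pow mid a b n k n', ← dyadicFamily_add_mul_two_pow mid a b n' k' n,
    Nat.add_comm n' n, h]

variable {mid a b} (r : α → α → Prop)
  (hmid : ∀ x y, r x y → r x (mid x y) ∧ r (mid x y) y) (hab : r a b)
include hmid hab

lemma rel_dyadicFamily_succ {n k : ℕ} (hk : k < 2 ^ n) :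
    r (dyadicFamily mid a b n k) (dyadicFamily mid a b n (k + 1)) := by
  induction n generalizing k with
  | zero =>
    obtain rfl : k = 0 := by simpa using hk
    simpa [dyadicFamily] using hab
  | succ n ih =>
    obtain ⟨j, rfl | rfl⟩ := Nat.even_or_odd' k
    · rw [dyadicFamily_succ_two_mul, dyadicFamily_succ_two_mul_add_one]
      exact (hmid _ _ (ih (by omega))).1
    · rw [show 2 * j + 1 + 1 = 2 * (j + 1) by ring, dyadicFamily_succ_two_mul,
        dyadicFamily_succ_two_mul_add_one]
      exact (hmid _ _ (ih (by omega))).2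

lemma rel_dyadicFamily_of_lt [IsTrans α r] {n k k' : ℕ} (hkk' : k < k') (hk' : k' ≤ 2 ^ n) :
    r (dyadicFamily mid a b n k) (dyadicFamily mid a b n k') := by
  induction k', hkk' using Nat.le_induction with
  | base => exact rel_dyadicFamily_succ r hmid hab (by omega)
  | succ m hkm ih =>
    exact _root_.trans (ih (by omega)) (rel_dyadicFamily_succ r hmid hab (by omega))

lemma rel_dyadicFamily [IsTrans α r] {n k n' k' : ℕ} (hk' : k' ≤ 2 ^ n')
    (h : k * 2 ^ n' < k' * 2 ^ n) :
    r (dyadicFamily mid a b n k) (dyadicFamily mid a b n' k') := by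
  rw [← dyadicFamily_add_mul_two_pow mid a b n k n', ← dyadicFamily_add_mul_two_pow mid a b n' k' n,
    Nat.add_comm n' n]
  refine rel_dyadicFamily_of_lt r hmid hab h ?_
  rw [pow_add, mul_comm (2 ^ n)]
  exact Nat.mul_le_mul_right _ hk'

end DyadicFamily

def dyadicIcc : Set ℝ := {t | ∃ n k : ℕ, k ≤ 2 ^ n ∧ t = k / 2 ^ n}

lemma dyadicIcc_subset_Icc : dyadicIcc ⊆ Icc 0 1 := by
  rintro _ ⟨n, k, hk, rfl⟩
  refine ⟨by positivity, div_le_one_of_le₀ ?_ (by positivity)⟩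
  exact_mod_cast hk

lemma zero_mem_dyadicIcc : (0 : ℝ) ∈ dyadicIcc := ⟨0, 0, Nat.zero_le _, by simp⟩

lemma one_mem_dyadicIcc : (1 : ℝ) ∈ dyadicIcc := ⟨0, 1, le_rfl, by simp⟩

lemma exists_mem_dyadicIcc_btwn {x y : ℝ} (hx : 0 ≤ x) (hxy : x < y) (hy : y ≤ 1) :
    ∃ t ∈ dyadicIcc, x < t ∧ t < y := by
  obtain ⟨n, hn⟩ := exists_pow_lt_of_lt_one (sub_pos.mpr hxy) (by norm_num : (1 / 2 : ℝ) < 1)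
  have h2n : (0 : ℝ) < 2 ^ n := by positivity
  rw [div_pow, one_pow, div_lt_iff₀ h2n] at hn
  have hfloor := Nat.floor_le (mul_nonneg hx h2n.le)
  have hlt : x * 2 ^ n < ⌊x * 2 ^ n⌋₊ + 1 := Nat.lt_floor_add_one _
  have hup : ((⌊x * 2 ^ n⌋₊ + 1 : ℕ) : ℝ) < y * 2 ^ n := by push_cast; nlinarith
  refine ⟨(⌊x * 2 ^ n⌋₊ + 1 : ℕ) / 2 ^ n, ⟨n, _, ?_, rfl⟩, ?_, ?_⟩
  · have : ((⌊x * 2 ^ n⌋₊ + 1 : ℕ) : ℝ) < 2 ^ n := by nlinarith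
    exact_mod_cast this.le
  · rw [lt_div_iff₀ h2n]; exact_mod_cast hlt
  · rwa [div_lt_iff₀ h2n]

lemma exists_rel_dyadicIcc {α : Type*} {r : α → α → Prop} [IsTrans α r]
    (hdense : ∀ x y, r x y → ∃ m, r x m ∧ r m y) {a b : α} (hab : r a b) :
    ∃ g : ℝ → α, g 0 = a ∧ g 1 = b ∧ ∀ s ∈ dyadicIcc, ∀ t ∈ dyadicIcc, s < t → r (g s) (g t) := by
  classical
  have hmid : ∀ x y, ∃ m, r x y → r x m ∧ r m y := fun x y => by
    by_cases h : r x y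
    · obtain ⟨m, hm⟩ := hdense x y h
      exact ⟨m, fun _ => hm⟩
    · exact ⟨x, fun h' => absurd h' h⟩
  choose mid hmid using hmid
  let g : ℝ → α := fun t =>
    if h : t ∈ dyadicIcc then dyadicFamily mid a b h.choose h.choose_spec.choose else a
  have hg : ∀ n k : ℕ, k ≤ 2 ^ n → g (k / 2 ^ n) = dyadicFamily mid a b n k := by
    intro n k hk
    have h : (k / 2 ^ n : ℝ) ∈ dyadicIcc := ⟨n, k, hk, rfl⟩
    simp only [g, dif_pos h]
    apply dyadicFamily_congr
    have := h.choose_spec.choose_spec.2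
    rw [div_eq_div_iff (by positivity) (by positivity)] at this
    exact_mod_cast this.symm
  refine ⟨g, by simpa [dyadicFamily] using hg 0 0 (Nat.zero_le _),
    by simpa [dyadicFamily] using hg 0 1 le_rfl, ?_⟩
  rintro _ ⟨n, k, hk, rfl⟩ _ ⟨n', k', hk', rfl⟩ hlt
  rw [hg n k hk, hg n' k' hk']
  rw [div_lt_div_iff₀ (by positivity) (by positivity)] at hlt
  exact rel_dyadicFamily r hmid hab hk' (by exact_mod_cast hlt)

section InfLevel

variable {X : Type*} {S : Set ℝ} {A B : ℝ → Set X} {x : X} {t : ℝ}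

noncomputable def infLevel (S : Set ℝ) (A : ℝ → Set X) (x : X) : ℝ :=
  sInf (insert 1 {t ∈ S | x ∈ A t})

lemma bddBelow_levels (hS : S ⊆ Icc 0 1) (x : X) : BddBelow (insert 1 {t ∈ S | x ∈ A t}) := by
  refine ⟨0, ?_⟩
  rintro t (rfl | ⟨ht, -⟩)
  exacts [zero_le_one, (hS ht).1]

lemma infLevel_le_one (hS : S ⊆ Icc 0 1) : infLevel S A x ≤ 1 :=
  csInf_le (bddBelow_levels hS x) (mem_insert _ _)

lemma infLevel_nonneg (hS : S ⊆ Icc 0 1) : 0 ≤ infLevel S A x := by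
  refine le_csInf ⟨1, mem_insert _ _⟩ ?_
  rintro t (rfl | ⟨ht, -⟩)
  exacts [zero_le_one, (hS ht).1]

lemma infLevel_le (hS : S ⊆ Icc 0 1) (ht : t ∈ S) (hx : x ∈ A t) : infLevel S A x ≤ t :=
  csInf_le (bddBelow_levels hS x) (mem_insert_of_mem _ ⟨ht, hx⟩)

lemma infLevel_eq_one (h : ∀ t ∈ S, x ∉ A t) : infLevel S A x = 1 := by
  have : {t ∈ S | x ∈ A t} = ∅ := eq_empty_of_forall_notMem fun t ht => h t ht.1 ht.2
  simp [infLevel, this]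

lemma le_infLevel (hS : S ⊆ Icc 0 1) (hmono : ∀ s ∈ S, ∀ t ∈ S, s < t → A s ⊆ A t)
    (ht : t ∈ S) (hx : x ∉ A t) : t ≤ infLevel S A x := by
  refine le_csInf ⟨1, mem_insert _ _⟩ ?_
  rintro s (rfl | ⟨hs, hxs⟩)
  · exact (hS ht).2
  · by_contra! hst
    exact hx (hmono s hs t ht hst hxs)

lemma mem_of_infLevel_lt (hS : S ⊆ Icc 0 1) (hmono : ∀ s ∈ S, ∀ t ∈ S, s < t → A s ⊆ A t)
    (ht : t ∈ S) (h : infLevel S A x < t) : x ∈ A t := by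
  by_contra hx
  exact (le_infLevel hS hmono ht hx).not_gt h

lemma notMem_of_lt_infLevel (hS : S ⊆ Icc 0 1)
    (hdense : ∀ x y, 0 ≤ x → x < y → y ≤ 1 → ∃ t ∈ S, x < t ∧ t < y)
    (hBA : ∀ s ∈ S, ∀ t ∈ S, s < t → B s ⊆ A t) (ht : t ∈ S) (h : t < infLevel S A x) :
    x ∉ B t := by
  obtain ⟨t', ht', htt', ht'x⟩ := hdense t _ (hS ht).1 h (infLevel_le_one hS)
  exact fun hx => (infLevel_le hS ht' (hBA t ht t' ht' htt' hx)).not_gt ht'x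

variable [TopologicalSpace X]

lemma continuous_infLevel (hS : S ⊆ Icc 0 1)
    (hdense : ∀ x y, 0 ≤ x → x < y → y ≤ 1 → ∃ t ∈ S, x < t ∧ t < y)
    (hAB : ∀ t, A t ⊆ B t) (hBA : ∀ s ∈ S, ∀ t ∈ S, s < t → B s ⊆ A t)
    (hA : ∀ t ∈ S, IsOpen (A t)) (hB : ∀ t ∈ S, IsClosed (B t)) :
    Continuous (infLevel S A) := by
  have hmono : ∀ s ∈ S, ∀ t ∈ S, s < t → A s ⊆ A t :=
    fun s hs t ht hst => (hAB s).trans (hBA s hs t ht hst)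
  refine continuous_iff_lower_upperSemicontinuous.mpr ⟨fun x c hc => ?_, fun x c hc => ?_⟩
  · rcases lt_or_ge c 0 with hc0 | hc0
    · exact Filter.Eventually.of_forall fun y => hc0.trans_le (infLevel_nonneg hS)
    obtain ⟨t, ht, hct, htx⟩ := hdense c _ hc0 hc (infLevel_le_one hS)
    filter_upwards [(hB t ht).isOpen_compl.mem_nhds (notMem_of_lt_infLevel hS hdense hBA ht htx)]
      with y hy
    exact hct.trans_le (le_infLevel hS hmono ht fun h => hy (hAB t h))
  · rcases lt_or_ge 1 c with hc1 | hc1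
    · exact Filter.Eventually.of_forall fun y => (infLevel_le_one hS).trans_lt hc1
    obtain ⟨t, ht, hxt, htc⟩ := hdense _ c (infLevel_nonneg hS) hc hc1
    filter_upwards [(hA t ht).mem_nhds (mem_of_infLevel_lt hS hmono ht hxt)] with y hy
    exact (infLevel_le hS ht hy).trans_lt htc

def IntervalPreserving (f : X → ℝ) : Prop :=
  ∀ a w b : X, Between a w b → min (f a) (f b) ≤ f w ∧ f w ≤ max (f a) (f b)

/-- A point separating `a` from `b` lies in every preconnected set containing both, so no `B t`
can contain `a` and `b` but not `w`, and neither can any `(A t)ᶜ`. -/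
lemma intervalPreserving_infLevel (hS : S ⊆ Icc 0 1)
    (hdense : ∀ x y, 0 ≤ x → x < y → y ≤ 1 → ∃ t ∈ S, x < t ∧ t < y)
    (hAB : ∀ t, A t ⊆ B t) (hBA : ∀ s ∈ S, ∀ t ∈ S, s < t → B s ⊆ A t)
    (hA : ∀ t ∈ S, IsPreconnected (A t)ᶜ) (hB : ∀ t ∈ S, IsPreconnected (B t)) :
    IntervalPreserving (infLevel S A) := by
  have hmono : ∀ s ∈ S, ∀ t ∈ S, s < t → A s ⊆ A t :=
    fun s hs t ht hst => (hAB s).trans (hBA s hs t ht hst)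
  rintro a w b (hw | rfl | rfl)
  · constructor
    · by_contra! h
      obtain ⟨t, ht, hwt, htab⟩ := hdense _ _ (infLevel_nonneg hS) h
        ((min_le_left _ _).trans (infLevel_le_one hS))
      have hout : ∀ x, t < infLevel S A x → x ∈ (A t)ᶜ :=
        fun x hx hxA => notMem_of_lt_infLevel hS hdense hBA ht hx (hAB t hxA)
      exact hw.mem_of_isPreconnected (hA t ht) (hout a (htab.trans_le (min_le_left _ _)))
        (hout b (htab.trans_le (min_le_right _ _))) (mem_of_infLevel_lt hS hmono ht hwt)
    · by_contra! h
      obtain ⟨t, ht, habt, htw⟩ := hdense _ _ ((infLevel_nonneg hS).trans (le_max_left _ _)) h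
        (infLevel_le_one hS)
      have hin : ∀ x, infLevel S A x < t → x ∈ B t :=
        fun x hx => hAB t (mem_of_infLevel_lt hS hmono ht hx)
      exact notMem_of_lt_infLevel hS hdense hBA ht htw (hw.mem_of_isPreconnected (hB t ht)
        (hin a ((le_max_left _ _).trans_lt habt)) (hin b ((le_max_right _ _).trans_lt habt)))
  · exact ⟨min_le_left _ _, le_max_left _ _⟩
  · exact ⟨min_le_right _ _, le_max_right _ _⟩

end InfLevel

theorem stmt_9_general {D : Type*} [TopologicalSpace D] [ConnectedSpace D]
    (hsep : ∀ u v : D, u ≠ v → ∃ w, Separates w u v)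
    (u v : D) (huv : u ≠ v) :
    ∃ f : D → ℝ, Continuous f ∧ (∀ x, f x ∈ Set.Icc (0 : ℝ) 1) ∧
      (∀ a w b : D, Between a w b → min (f a) (f b) ≤ f w ∧ f w ≤ max (f a) (f b)) ∧
      f u = 0 ∧ f v = 1 := by
  obtain ⟨c₀, c₁, hu, hv, h₀₁⟩ := PointCut.exists_lt_of_ne hsep huv
  obtain ⟨g, hg₀, hg₁, hg⟩ :=
    exists_rel_dyadicIcc (r := (· < ·)) (fun _ _ => PointCut.exists_lt_lt hsep) h₀₁
  have hS := dyadicIcc_subset_Icc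
  have hdense : ∀ x y : ℝ, 0 ≤ x → x < y → y ≤ 1 → ∃ t ∈ dyadicIcc, x < t ∧ t < y :=
    fun _ _ => exists_mem_dyadicIcc_btwn
  have hAB : ∀ t, (g t).left ⊆ insert (g t).point (g t).left := fun t => subset_insert _ _
  have hv_notMem : ∀ t ∈ dyadicIcc, v ∉ (g t).left := by
    intro t ht hvt
    have hsub : (g t).left ⊆ c₁.left := by
      rcases (hS ht).2.lt_or_eq with h | rfl
      · exact hg₁ ▸ PointCut.left_subset_of_lt (hg t ht 1 one_mem_dyadicIcc h)
      · exact hg₁ ▸ subset_rfl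
    exact c₁.disjoint_left_right.notMem_of_mem_right hv (hsub hvt)
  refine ⟨infLevel dyadicIcc fun t => (g t).left,
    continuous_infLevel hS hdense hAB hg (fun t _ => (g t).isOpen_left)
      (fun t _ => (g t).isClosed_insert_left),
    fun x => ⟨infLevel_nonneg hS, infLevel_le_one hS⟩,
    intervalPreserving_infLevel hS hdense hAB hg
      (fun t _ => (g t).compl_left ▸ (g t).isPreconnected_insert_right)
      (fun t _ => (g t).isPreconnected_insert_left),
    le_antisymm (infLevel_le hS zero_mem_dyadicIcc (hg₀ ▸ hu)) (infLevel_nonneg hS),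
    infLevel_eq_one hv_notMem⟩

/-- On a dendron, every pair of distinct points is separated by a continuous
interval-preserving function into `[0,1]`. -/
theorem stmt_9 {D : Type*} [TopologicalSpace D] [CompactSpace D] [T2Space D] [ConnectedSpace D]
    (hsep : ∀ u v : D, u ≠ v → ∃ w, Separates w u v)
    (u v : D) (huv : u ≠ v) :
    ∃ f : D → ℝ, Continuous f ∧ (∀ x, f x ∈ Set.Icc (0 : ℝ) 1) ∧
      (∀ a w b : D, Between a w b → min (f a) (f b) ≤ f w ∧ f w ≤ max (f a) (f b)) ∧
      f u = 0 ∧ f v = 1 :=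
  stmt_9_general hsep u v huv
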